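/- The ω-language L = {aⁿ b aⁿ b^ω | n∈ℕ} over {a,b} is a deterministic ω-context-free language (L ∈ DCFL_ω), but for every partition of {a,b} into calls, returns and internal actions, L is not a visibly pushdown ω-language (L ∉ VPL_ω); hence DCFL_ω ⊄ VPL_ω. -/

import Mathlib

/-!  Common definitions: pushdown machines, ω-pushdown automata, pushdown games,
pushdown strategies (deterministic pushdown automata with output), and
alternating two-way / nondeterministic one-way parity tree automata. -/

/-- Kinds of letters in a visibly pushdown alphabet. -/
inductive VKind : Type
  | call | ret | intern

/-- A pushdown machine over states `Q`, input alphabet `A` and stack alphabet `Γ`.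
The initial stack symbol `⊥` is implicit: a stack content `γ⊥ ∈ Γ*⊥` is modeled by
the list `γ` of symbols above `⊥`, and the top-of-stack argument `none` of the
transition function represents `⊥` (i.e. the empty list).  A transition replaces the
topmost symbol by the returned word (respectively pushes the returned word on top of
`⊥`), so `⊥` can neither be pushed onto nor removed from the stack.  The input
letter `none` is `ε`. -/
structure PDM (Q A Γ : Type) where
  δ : Q → Option A → Option Γ → Set (Q × List Γ)
  qin : Q

namespace PDM

variable {Q A Γ : Type}

/-- A configuration: a state together with the stack content (above `⊥`). -/
abbrev Conf (Q Γ : Type) : Type := Q × List Γ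

/-- Stack height of a configuration `(q,γ⊥)`: the length `|γ⊥|` (the `⊥` counts). -/
def sh (c : Conf Q Γ) : ℕ := c.2.length + 1

/-- One transition step of the machine, labeled by `none` (an `ε`-move) or `some a`. -/
def Step (M : PDM Q A Γ) (c : Conf Q Γ) (a : Option A) (c' : Conf Q Γ) : Prop :=
  match c.2 with
  | [] => c' ∈ M.δ c.1 a none
  | t :: rest => ∃ γ' : List Γ, (c'.1, γ') ∈ M.δ c.1 a (some t) ∧ c'.2 = γ' ++ rest

/-- Determinism: `|δ(q,a,A)| + |δ(q,ε,A)| ≤ 1` for all `q ∈ Q`, `a ∈ A`, `A ∈ Γ⊥`. -/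
def Deterministic (M : PDM Q A Γ) : Prop :=
  ∀ (q : Q) (t : Option Γ),
    (∀ a : Option A, (M.δ q a t).Subsingleton) ∧
    (∀ a : A, (M.δ q (some a) t).Nonempty → M.δ q none t = ∅)

/-- A realtime machine has no `ε`-transitions. -/
def Realtime (M : PDM Q A Γ) : Prop := ∀ q t, M.δ q none t = ∅

/-- Normal form: every transition is a push of exactly one symbol (`δ(q,a,A)=(q',A'A)`),
a skip (`δ(q,a,A)=(q',A)`), or a pop (`δ(q,a,A)=(q',ε)`). -/
def NormalForm (M : PDM Q A Γ) : Prop :=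
  ∀ q a t p, p ∈ M.δ q a t →
    p.2 = ([] : List Γ) ∨ p.2 = t.toList ∨ ∃ B : Γ, p.2 = B :: t.toList

/-- A blind one-counter machine: every transition enabled with empty stack (counter `0`)
is also enabled, with the same state change and counter effect, with nonempty stack:
`δ(q,a,⊥) ∋ (q',Aⁿ⊥)` implies `δ(q,a,A) ∋ (q',AⁿA)`. -/
def Blind (M : PDM Q A Unit) : Prop :=
  ∀ (q : Q) (a : Option A) (p : Q × List Unit),
    p ∈ M.δ q a none → (p.1, p.2 ++ [()]) ∈ M.δ q a (some ())

/-- A visibly pushdown machine w.r.t. the partition `kind` of the input alphabet into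
calls, returns and internal actions: no `ε`-transitions; on a call exactly one symbol is
pushed and the transition does not depend on the top of the stack; on a return the top
symbol is popped (`⊥` is left unchanged); on an internal action the stack is unchanged
and the transition does not depend on the top of the stack. -/
def Visibly (M : PDM Q A Γ) (kind : A → VKind) : Prop :=
  (∀ q t, M.δ q none t = ∅) ∧
  (∀ q a, kind a = VKind.call → ∃ mv : Set (Q × Γ),
      ∀ t, M.δ q (some a) t = (fun p : Q × Γ => (p.1, p.2 :: t.toList)) '' mv) ∧
  (∀ q a t, kind a = VKind.ret → ∀ p ∈ M.δ q (some a) t, p.2 = ([] : List Γ)) ∧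
  (∀ q a, kind a = VKind.intern → ∃ mv : Set Q,
      ∀ t, M.δ q (some a) t = (fun q' : Q => (q', t.toList)) '' mv)

/-- `ρ` is an infinite run of `M` on the ω-word `α`: it starts in the initial
configuration `(q_in,⊥)`, each step follows `δ` on a letter or on `ε`, and the
consumed letters (the non-`ε` labels, in order) form exactly `α`. -/
def IsRunOn (M : PDM Q A Γ) (ρ : ℕ → Conf Q Γ) (α : ℕ → A) : Prop :=
  ρ 0 = (M.qin, []) ∧
  ∃ u : ℕ → Option A,
    (∀ n : ℕ, M.Step (ρ n) (u n) (ρ (n + 1))) ∧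
    ∃ φ : ℕ → ℕ, StrictMono φ ∧ (∀ k : ℕ, u (φ k) = some (α k)) ∧
      ∀ n : ℕ, (u n).isSome = true → ∃ k : ℕ, φ k = n

/-- `Inf(ρ)`: states occurring infinitely often in `ρ`. -/
def InfOcc (ρ : ℕ → Conf Q Γ) : Set Q := {q | ∀ n : ℕ, ∃ m, n ≤ m ∧ (ρ m).1 = q}

/-- `Steps_ρ = {n | ∀ m ≥ n, sh(ρ(m)) ≥ sh(ρ(n))}`. -/
def StepsSet (ρ : ℕ → Conf Q Γ) : Set ℕ := {n | ∀ m : ℕ, n ≤ m → sh (ρ n) ≤ sh (ρ m)}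

/-- States occurring infinitely often in the subsequence `ρ|_{Steps_ρ}`. -/
def InfOccStair (ρ : ℕ → Conf Q Γ) : Set Q :=
  {q | ∀ n : ℕ, ∃ m, n ≤ m ∧ m ∈ StepsSet ρ ∧ (ρ m).1 = q}

/-- Parity condition: the minimal priority seen infinitely often is even. -/
def ParityAcc (col : Q → ℕ) (ρ : ℕ → Conf Q Γ) : Prop :=
  Even (sInf (col '' InfOcc ρ))

/-- Stair parity condition: the minimal priority seen infinitely often in
`ρ|_{Steps_ρ}` is even. -/
def StairParityAcc (col : Q → ℕ) (ρ : ℕ → Conf Q Γ) : Prop :=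
  Even (sInf (col '' InfOccStair ρ))

/-- The ω-language of the parity pushdown automaton `(M, col)`. -/
def ParityLang (M : PDM Q A Γ) (col : Q → ℕ) : Set (ℕ → A) :=
  {α | ∃ ρ : ℕ → Conf Q Γ, M.IsRunOn ρ α ∧ ParityAcc col ρ}

/-- The ω-language of the stair parity pushdown automaton `(M, col)`. -/
def StairParityLang (M : PDM Q A Γ) (col : Q → ℕ) : Set (ℕ → A) :=
  {α | ∃ ρ : ℕ → Conf Q Γ, M.IsRunOn ρ α ∧ StairParityAcc col ρ}

/-- Acceptance of a finite word by the pushdown automaton `(M, F)`: some finite run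
from the initial configuration consuming exactly `w` ends in a final state. -/
def AcceptsFin (M : PDM Q A Γ) (F : Set Q) (w : List A) : Prop :=
  ∃ (m : ℕ) (ρ : ℕ → Conf Q Γ) (u : ℕ → Option A),
    ρ 0 = (M.qin, []) ∧ (∀ k < m, M.Step (ρ k) (u k) (ρ (k + 1))) ∧
    (List.ofFn (fun k : Fin m => u k.1)).reduceOption = w ∧ (ρ m).1 ∈ F

/-- An infinite play of the pushdown game: a sequence of configurations starting in the
initial configuration, together with the labels of the chosen transitions. -/
def IsPlay (M : PDM Q A Γ) (conf : ℕ → Conf Q Γ) (lab : ℕ → Option A) : Prop :=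
  conf 0 = (M.qin, []) ∧ ∀ n : ℕ, M.Step (conf n) (lab n) (conf (n + 1))

/-- Player `i` has a winning strategy (as an abstract function from histories of moves
to moves) in the pushdown game on `M` given by the partition `owner` of the states,
where Player 0 wins an infinite play `conf` iff `W conf` holds: the strategy always
proposes an enabled transition at any reachable consistent position owned by Player `i`,
and every infinite play consistent with it is won by Player `i`. -/
def HasAbstractWinning (M : PDM Q A Γ) (owner : Q → Fin 2)
    (W : (ℕ → Conf Q Γ) → Prop) (i : Fin 2) : Prop :=
  ∃ σ : List (Option A) → Option A,
    (∀ (n : ℕ) (conf : ℕ → Conf Q Γ) (lab : ℕ → Option A),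
      conf 0 = (M.qin, []) →
      (∀ k < n, M.Step (conf k) (lab k) (conf (k + 1))) →
      (∀ k < n, owner (conf k).1 = i → lab k = σ (List.ofFn (fun j : Fin k => lab j.1))) →
      owner (conf n).1 = i →
      ∃ c' : Conf Q Γ, M.Step (conf n) (σ (List.ofFn (fun j : Fin n => lab j.1))) c') ∧
    (∀ (conf : ℕ → Conf Q Γ) (lab : ℕ → Option A),
      IsPlay M conf lab →
      (∀ n : ℕ, owner (conf n).1 = i → lab n = σ (List.ofFn (fun j : Fin n => lab j.1))) →
      (W conf ↔ i = 0))

/-- The pushdown game on `M` with partition `owner` and winning condition `W`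
(for Player 0) is determined. -/
def Determined (M : PDM Q A Γ) (owner : Q → Fin 2)
    (W : (ℕ → Conf Q Γ) → Prop) : Prop :=
  ∃ i : Fin 2, HasAbstractWinning M owner W i

end PDM

/-- A deterministic pushdown automaton with output (a pushdown strategy): it reads the
opponent's moves and outputs the player's own next choices.  `δ s inp t = some (s', γ', out)`
means: in state `s` with top of stack `t` (`none` = `⊥`), on input `inp` (`none` = `ε`)
the machine moves to state `s'`, replaces the top of the stack by `γ'` and outputs `out`
(`none` = `ε`-output).  Partiality of `δ` gives determinism per input letter. -/
structure StratPDA (A Γ' : Type) where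
  S : Type
  sin : S
  δ : S → Option A → Option Γ' → Option (S × List Γ' × Option A)

namespace StratPDA

variable {Q A Γ Γ' : Type}

/-- Determinism: if an `ε`-input transition is present then no letter transition is. -/
def Det (T : StratPDA A Γ') : Prop :=
  ∀ (s : T.S) (t : Option Γ'),
    (T.δ s none t).isSome = true → ∀ a : A, T.δ s (some a) t = none

/-- One step of the strategy transducer (same stack convention as for `PDM`). -/
def TStep (T : StratPDA A Γ') (c : T.S × List Γ') (inp out : Option A)
    (c' : T.S × List Γ') : Prop :=
  match c.2 with
  | [] => T.δ c.1 inp none = some (c'.1, c'.2, out)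
  | t :: rest => ∃ γ' : List Γ',
      T.δ c.1 inp (some t) = some (c'.1, γ', out) ∧ c'.2 = γ' ++ rest

/-- A blind one-counter strategy transducer: every transition enabled with counter `0`
is also enabled, with the same effect, with nonzero counter. -/
def Blind (T : StratPDA A Unit) : Prop :=
  ∀ (s : T.S) (inp : Option A) (r : T.S × List Unit × Option A),
    T.δ s inp none = some r → T.δ s inp (some ()) = some (r.1, r.2.1 ++ [()], r.2.2)

/-- A realtime strategy transducer: no transition both reads `ε` and outputs `ε`
(every transition carries a letter, either read or written). -/
def Realtime (T : StratPDA A Γ') : Prop :=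
  ∀ (s : T.S) (t : Option Γ') (r : T.S × List Γ' × Option A),
    T.δ s none t = some r → r.2.2 ≠ none

/-- Stack discipline of a visibly pushdown machine for the letter `a`. -/
def VStk (kind : A → VKind) (a : A) (t : Option Γ') (γ' : List Γ') : Prop :=
  match kind a with
  | VKind.call => ∃ B : Γ', γ' = B :: t.toList
  | VKind.ret => γ' = ([] : List Γ')
  | VKind.intern => γ' = t.toList

/-- A visibly pushdown strategy transducer: every transition carries exactly one letter
(the letter read on input transitions, the letter written on output transitions) and the
stack is used according to the kind of that letter. -/
def Visibly (T : StratPDA A Γ') (kind : A → VKind) : Prop :=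
  (∀ (s : T.S) (a : A) (t : Option Γ') (s' : T.S) (γ' : List Γ') (out : Option A),
      T.δ s (some a) t = some (s', γ', out) → out = none ∧ VStk kind a t γ') ∧
  (∀ (s : T.S) (t : Option Γ') (s' : T.S) (γ' : List Γ') (out : Option A),
      T.δ s none t = some (s', γ', out) → ∃ a : A, out = some a ∧ VStk kind a t γ')

/-- The strategy transducer `T`, playing for Player `i`, is consistent with the play
`(conf, lab)` of the pushdown game on `M`: `T` runs in lockstep with the play, reading
the opponent's moves and outputting Player `i`'s moves. -/
def Consistent (T : StratPDA A Γ') (M : PDM Q A Γ) (owner : Q → Fin 2) (i : Fin 2)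
    (conf : ℕ → PDM.Conf Q Γ) (lab : ℕ → Option A)
    (τ : ℕ → T.S × List Γ') : Prop :=
  τ 0 = (T.sin, []) ∧
  ∀ n : ℕ, T.TStep (τ n) (if owner (conf n).1 = i then none else lab n)
      (if owner (conf n).1 = i then lab n else none) (τ (n + 1))

/-- `T` realizes a winning strategy for Player `i` in the pushdown game on `M` with
partition `owner`, where Player 0 wins an infinite play `conf` iff `W conf` holds:
`T` is deterministic; along every finite `T`-consistent play prefix `T` proposes an
enabled move at positions of Player `i` and can process every enabled move of the
opponent; and every infinite play consistent with `T` is won by Player `i`. -/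
def IsWinningStrat (T : StratPDA A Γ') (M : PDM Q A Γ) (owner : Q → Fin 2)
    (W : (ℕ → PDM.Conf Q Γ) → Prop) (i : Fin 2) : Prop :=
  T.Det ∧
  (∀ (n : ℕ) (conf : ℕ → PDM.Conf Q Γ) (lab : ℕ → Option A) (τ : ℕ → T.S × List Γ'),
    conf 0 = (M.qin, []) → τ 0 = (T.sin, []) →
    (∀ k < n, M.Step (conf k) (lab k) (conf (k + 1))) →
    (∀ k < n, T.TStep (τ k) (if owner (conf k).1 = i then none else lab k)
        (if owner (conf k).1 = i then lab k else none) (τ (k + 1))) →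
    ((owner (conf n).1 = i →
        ∃ (x : Option A) (c' : PDM.Conf Q Γ) (τ' : T.S × List Γ'),
          M.Step (conf n) x c' ∧ T.TStep (τ n) none x τ') ∧
     (owner (conf n).1 ≠ i →
        ∀ (x : Option A) (c' : PDM.Conf Q Γ), M.Step (conf n) x c' →
          ∃ τ' : T.S × List Γ', T.TStep (τ n) x none τ'))) ∧
  (∀ (conf : ℕ → PDM.Conf Q Γ) (lab : ℕ → Option A) (τ : ℕ → T.S × List Γ'),
    PDM.IsPlay M conf lab → T.Consistent M owner i conf lab τ → (W conf ↔ i = 0))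

end StratPDA

/-! Tree automata. -/

/-- Positive Boolean formulas over `X` (with `true` and `false`). -/
inductive PosBool (X : Type) : Type
  | tru | fls
  | var (x : X)
  | and (f g : PosBool X)
  | or (f g : PosBool X)

/-- Satisfaction of a positive Boolean formula by a set of variables. -/
def PosBool.Sat {X : Type} : PosBool X → Set X → Prop
  | .tru, _ => True
  | .fls, _ => False
  | .var x, Y => x ∈ Y
  | .and f g, Y => f.Sat Y ∧ g.Sat Y
  | .or f g, Y => f.Sat Y ∨ g.Sat Y

/-- Navigation directions in a `Γ`-tree: up (to the parent), stay, or down to child `A`.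
Nodes of the full `Γ`-tree are lists over `Γ` with the last chosen direction at the head,
so the child `γ.↓_A` is `A :: γ` and the parent of `A :: γ` is `γ`. -/
inductive TMove (Γ : Type) : Type
  | up | stay
  | down (A : Γ)

def TMove.apply {Γ : Type} : TMove Γ → List Γ → Option (List Γ)
  | .up, [] => none
  | .up, _ :: l => some l
  | .stay, l => some l
  | .down A, l => some (A :: l)

/-- An alternating two-way parity tree automaton over `Sig`-labeled full `Γ`-trees. -/
structure A2TA (Sig Γ : Type) where
  Q : Type
  qin : Q
  δ : Q → Sig → PosBool (TMove Γ × Q)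
  col : Q → ℕ

/-- A run of the A2TA `B` on the `Sig`-labeled full `Γ`-tree `lab`: a tree (over some
branching type `Ξ`, children obtained by consing) whose nodes are labeled by pairs
(state, tree node), rooted at `(q_in, ε)`, such that the successors of every node
satisfy the transition formula. -/
structure A2Run {Sig Γ : Type} (B : A2TA Sig Γ) (lab : List Γ → Sig) where
  Ξ : Type
  tree : Set (List Ξ)
  rlab : List Ξ → B.Q × List Γ
  root_mem : [] ∈ tree
  root_lab : rlab [] = (B.qin, [])
  closed : ∀ (ξ : Ξ) (l : List Ξ), ξ :: l ∈ tree → l ∈ tree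
  trans : ∀ l ∈ tree, ∃ S : Set (TMove Γ × B.Q),
    PosBool.Sat (B.δ (rlab l).1 (lab (rlab l).2)) S ∧
    ∀ dq ∈ S, ∃ γ' : List Γ, TMove.apply dq.1 (rlab l).2 = some γ' ∧
      ∃ ξ : Ξ, ξ :: l ∈ tree ∧ rlab (ξ :: l) = (dq.2, γ')

/-- An infinite path of a run, starting at the root. -/
def A2Run.IsPath {Sig Γ : Type} {B : A2TA Sig Γ} {lab : List Γ → Sig}
    (r : A2Run B lab) (π : ℕ → List r.Ξ) : Prop :=
  π 0 = [] ∧ ∀ n : ℕ, (∃ ξ : r.Ξ, π (n + 1) = ξ :: π n) ∧ π (n + 1) ∈ r.tree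

/-- `B` accepts `lab`: some run is accepting, i.e. on every infinite path the minimal
priority seen infinitely often is even. -/
def A2TA.Accepts {Sig Γ : Type} (B : A2TA Sig Γ) (lab : List Γ → Sig) : Prop :=
  ∃ r : A2Run B lab, ∀ π : ℕ → List r.Ξ, r.IsPath π →
    Even (sInf (B.col '' {q | ∀ n : ℕ, ∃ m, n ≤ m ∧ (r.rlab (π m)).1 = q}))

/-- Stair acceptance for an automaton with the same components (a StA2TA): on every
infinite path the minimal priority seen infinitely often at the `Steps` positions
(positions whose stack/tree-node height is never exceeded from below later) is even. -/
def A2TA.StairAccepts {Sig Γ : Type} (B : A2TA Sig Γ) (lab : List Γ → Sig) : Prop :=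
  ∃ r : A2Run B lab, ∀ π : ℕ → List r.Ξ, r.IsPath π →
    Even (sInf (B.col '' {q | ∀ n : ℕ, ∃ m, n ≤ m ∧
      (∀ m' : ℕ, m ≤ m' → (r.rlab (π m)).2.length ≤ (r.rlab (π m')).2.length) ∧
      (r.rlab (π m)).1 = q}))

/-- A nondeterministic one-way parity tree automaton over `Sig`-labeled full `Γ`-trees. -/
structure N1TA (Sig Γ : Type) where
  Q : Type
  qin : Q
  Δ : Q → Sig → Set (Γ → Q)
  col : Q → ℕ

/-- Acceptance for N1TA: some run (one state per node, top-down) is such that along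
every branch the minimal priority seen infinitely often is even. -/
def N1TA.Accepts {Sig Γ : Type} (E : N1TA Sig Γ) (lab : List Γ → Sig) : Prop :=
  ∃ r : List Γ → E.Q, r [] = E.qin ∧
    (∀ l : List Γ, ∃ f ∈ E.Δ (r l) (lab l), ∀ A : Γ, r (A :: l) = f A) ∧
    ∀ β : ℕ → Γ, Even (sInf (E.col ''
      {q | ∀ n : ℕ, ∃ m, n ≤ m ∧ r (List.ofFn (fun j : Fin m => β j.1)).reverse = q}))


/-- `L ∈ DCFL_ω`: `L` is the ω-language of some deterministic parity pushdown automaton. -/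
def InDCFLomega {A : Type} (L : Set (ℕ → A)) : Prop :=
  ∃ (Q Γ : Type) (_ : Finite Q) (_ : Finite Γ) (M : PDM Q A Γ) (col : Q → ℕ),
    M.Deterministic ∧ PDM.ParityLang M col = L

/-- `L ∈ StDCFL_ω`: `L` is the ω-language of some deterministic stair parity pushdown
automaton. -/
def InStDCFLomega {A : Type} (L : Set (ℕ → A)) : Prop :=
  ∃ (Q Γ : Type) (_ : Finite Q) (_ : Finite Γ) (M : PDM Q A Γ) (col : Q → ℕ),
    M.Deterministic ∧ PDM.StairParityLang M col = L

/-- `L ∈ VPL_ω` (w.r.t. the visibly pushdown alphabet given by `kind`): `L` is the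
ω-language of some (nondeterministic) parity visibly pushdown automaton. -/
def InVPLomega {A : Type} (kind : A → VKind) (L : Set (ℕ → A)) : Prop :=
  ∃ (Q Γ : Type) (_ : Finite Q) (_ : Finite Γ) (M : PDM Q A Γ) (col : Q → ℕ),
    M.Visibly kind ∧ PDM.ParityLang M col = L

/-- The two-letter alphabet `{a, b}`. -/
inductive AB : Type
  | a | b

/-- The ω-language `L = {aⁿ b aⁿ b^ω | n ∈ ℕ}`. -/
def Lanbanb : Set (ℕ → AB) :=
  {α | ∃ n : ℕ, ∀ i : ℕ,
    α i = if i < n then AB.a else if i = n then AB.b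
          else if i ≤ 2 * n then AB.a else AB.b}

/-! The deterministic automaton pushes on the first block of `a`s, pops on the second one, and
enters its only accepting state when it reads a `b` with empty stack; it rejects on any later `a`.

For a visibly pushdown automaton the kinds of `a` and `b` are fixed. If `a` is a call and `b` a
return, a run on `aᴺ b aᴺ b^ω` with `N = |Q|²` matches every push of the second `a`-block with a
pop in the final `b`-block. Two of these matching pairs of positions carry the same pair of
states, and the well-matched factor between them can be cut out, so `aᴺ b aᴺ⁻ᵈ b^ω ∉ L` would be
accepted. Otherwise what happens after the first `a`-block does not depend on the stack: it is
empty when `a` is not a call, and it is never read when there are no returns. Then two accepting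
runs on `aⁿ b aⁿ b^ω` and `aᵐ b aᵐ b^ω` that are in the same state after the first block can be
crossed over, and `aᵐ b aⁿ b^ω ∉ L` would be accepted. -/

namespace PDM

variable {Q A Γ : Type}

theorem step_iff {M : PDM Q A Γ} {c c' : Conf Q Γ} {a : Option A} :
    M.Step c a c' ↔ ∃ γ, (c'.1, γ) ∈ M.δ c.1 a c.2.head? ∧ c'.2 = γ ++ c.2.tail := by
  rcases c with ⟨q, _ | ⟨t, rest⟩⟩
  · exact ⟨fun h => ⟨c'.2, h, (List.append_nil _).symm⟩, fun ⟨γ, h, e⟩ => by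
      rw [List.tail_nil, List.append_nil] at e; rwa [← e] at h⟩
  · rfl

def IsPath (M : PDM Q A Γ) (ρ : ℕ → Conf Q Γ) (α : ℕ → A) : Prop :=
  ∀ k, M.Step (ρ k) (some (α k)) (ρ (k + 1))

theorem isRunOn_iff_of_realtime {M : PDM Q A Γ} (hrt : M.Realtime) {ρ : ℕ → Conf Q Γ}
    {α : ℕ → A} : M.IsRunOn ρ α ↔ ρ 0 = (M.qin, []) ∧ M.IsPath ρ α := by
  refine ⟨fun ⟨h0, u, hstep, φ, hφ, hφα, hφsurj⟩ => ⟨h0, fun k => ?_⟩,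
    fun ⟨h0, hρ⟩ => ⟨h0, _, hρ, id, strictMono_id, fun _ => rfl, fun n _ => ⟨n, rfl⟩⟩⟩
  have hu : ∀ n, (u n).isSome := fun n => by
    obtain ⟨γ, hγ, -⟩ := step_iff.1 (hstep n)
    rcases h : u n with _ | a
    · rw [h, hrt] at hγ; exact absurd hγ (Set.notMem_empty _)
    · rfl
  have hφid : ∀ n, φ n = n := fun n => by
    induction n using Nat.strong_induction_on with
    | _ n ih =>
      obtain ⟨i, hi⟩ := hφsurj n (hu n)
      rcases lt_trichotomy i n with h | rfl | h
      · exact absurd (hi.symm.trans (ih i h)) h.ne'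
      · exact hi
      · exact absurd (hi ▸ hφ h) (not_lt.2 hφ.le_apply)
  simpa only [← hφα k, hφid] using hstep k

theorem infOcc_nonempty [Finite Q] (ρ : ℕ → Conf Q Γ) : (InfOcc ρ).Nonempty := by
  obtain ⟨q, hq⟩ := Finite.exists_infinite_fiber fun k => (ρ k).1
  refine ⟨q, fun n => ?_⟩
  obtain ⟨m, hm, hnm⟩ := (Set.infinite_coe_iff.1 hq).exists_gt n
  exact ⟨m, hnm.le, hm⟩

theorem infOcc_congr {ρ σ : ℕ → Conf Q Γ} (h : ∀ k, (ρ k).1 = (σ k).1) :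
    InfOcc ρ = InfOcc σ := by
  simp only [InfOcc, h]

def spliceAt {X : Type} (f g : ℕ → X) (m n : ℕ) (k : ℕ) : X :=
  if k < m then f k else g (n + (k - m))

theorem spliceAt_zero {X : Type} {f g : ℕ → X} {m n : ℕ} (h : f m = g n) :
    spliceAt f g m n 0 = f 0 := by
  rcases Nat.eq_zero_or_pos m with rfl | hm
  · simp [spliceAt, h]
  · simp [spliceAt, hm]

theorem spliceAt_of_le {X : Type} {f g : ℕ → X} {m n k : ℕ} (h : f m = g n) (hk : k ≤ m) :
    spliceAt f g m n k = f k := by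
  rcases hk.lt_or_eq with hk | rfl
  · simp [spliceAt, hk]
  · simp [spliceAt, h]

theorem infOcc_spliceAt (ρ σ : ℕ → Conf Q Γ) (m n : ℕ) :
    InfOcc (spliceAt ρ σ m n) = InfOcc σ := by
  ext q
  refine ⟨fun hq N => ?_, fun hq N => ?_⟩
  · obtain ⟨k, hk, rfl⟩ := hq (N + m)
    exact ⟨n + (k - m), by omega, by simp [spliceAt, show ¬k < m by omega]⟩
  · obtain ⟨k, hk, rfl⟩ := hq (N + n)
    exact ⟨m + (k - n), by omega, by
      simp [spliceAt, show m + (k - n) - m = k - n by omega, show n + (k - n) = k by omega]⟩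

def rebase (n : ℕ) (β : List Γ) (c : Conf Q Γ) : Conf Q Γ := (c.1, c.2.rdrop n ++ β)

section ofTransition

def ofTransition (f : Q → A → Option Γ → Q × List Γ) (q₀ : Q) : PDM Q A Γ where
  δ q a t := match a with
    | none => ∅
    | some x => {f q x t}
  qin := q₀

variable {f : Q → A → Option Γ → Q × List Γ} {q₀ : Q}

theorem ofTransition_realtime : (ofTransition f q₀).Realtime := fun _ _ => rfl

theorem ofTransition_deterministic : (ofTransition f q₀).Deterministic := fun _ _ =>
  ⟨fun a => by cases a <;> simp [ofTransition], fun _ _ => rfl⟩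

theorem step_ofTransition_iff {c c' : Conf Q Γ} {x : A} :
    (ofTransition f q₀).Step c (some x) c' ↔
      c' = ((f c.1 x c.2.head?).1, (f c.1 x c.2.head?).2 ++ c.2.tail) := by
  simp [step_iff, ofTransition, Prod.ext_iff, eq_comm]

end ofTransition

variable {M : PDM Q A Γ}

theorem step_spliceAt {ρ σ : ℕ → Conf Q Γ} {α β : ℕ → A} {m n k : ℕ} (h : ρ m = σ n)
    (hρ : k < m → M.Step (ρ k) (some (α k)) (ρ (k + 1)))
    (hσ : m ≤ k → M.Step (σ (n + (k - m))) (some (β (n + (k - m)))) (σ (n + (k - m) + 1))) :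
    M.Step (spliceAt ρ σ m n k) (some (spliceAt α β m n k)) (spliceAt ρ σ m n (k + 1)) := by
  rcases Nat.lt_or_ge k m with hk | hk
  · rw [spliceAt_of_le h hk.le, spliceAt_of_le h hk]
    simpa [spliceAt, hk] using hρ hk
  · simpa [spliceAt, show ¬k < m by omega, show ¬k + 1 < m by omega,
      show n + (k + 1 - m) = n + (k - m) + 1 by omega] using hσ hk

theorem spliceAt_mem_parityLang (hrt : M.Realtime) {col : Q → ℕ} {ρ σ : ℕ → Conf Q Γ}
    {α β : ℕ → A} {m n : ℕ} (h0 : ρ 0 = (M.qin, []))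
    (hρ : ∀ k < m, M.Step (ρ k) (some (α k)) (ρ (k + 1)))
    (hσ : ∀ k ≥ n, M.Step (σ k) (some (β k)) (σ (k + 1)))
    (h : ρ m = σ n) (hacc : ParityAcc col σ) :
    spliceAt α β m n ∈ M.ParityLang col :=
  ⟨spliceAt ρ σ m n, (isRunOn_iff_of_realtime hrt).2
    ⟨(spliceAt_zero h).trans h0, fun _ => step_spliceAt h (hρ _) fun _ => hσ _ (by omega)⟩,
    by rwa [ParityAcc, infOcc_spliceAt]⟩

theorem exists_isPath_of_mem_parityLang (hrt : M.Realtime) {col : Q → ℕ} {α : ℕ → A}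
    (h : α ∈ M.ParityLang col) :
    ∃ ρ, ρ 0 = (M.qin, []) ∧ M.IsPath ρ α ∧ ParityAcc col ρ := by
  obtain ⟨ρ, hρ, hacc⟩ := h
  exact ⟨ρ, ((isRunOn_iff_of_realtime hrt).1 hρ).1, ((isRunOn_iff_of_realtime hrt).1 hρ).2, hacc⟩

namespace Visibly

variable {kind : A → VKind}

theorem step_call (hv : M.Visibly kind) {a : A} (ha : kind a = .call) {c c' : Conf Q Γ}
    (h : M.Step c (some a) c') :
    ∃ B, c'.2 = B :: c.2 ∧ ∀ l, M.Step (c.1, l) (some a) (c'.1, B :: l) := by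
  obtain ⟨mv, hmv⟩ := hv.2.1 c.1 a ha
  obtain ⟨γ, hγ, hc'⟩ := step_iff.1 h
  rw [hmv] at hγ
  obtain ⟨⟨q', B⟩, hB, he⟩ := hγ
  simp only [Prod.mk.injEq] at he
  refine ⟨B, ?_, fun l => step_iff.2 ⟨B :: l.head?.toList, ?_, ?_⟩⟩
  · rw [hc', ← he.2]; cases c.2 <;> rfl
  · rw [hmv]; exact ⟨(q', B), hB, by rw [he.1]⟩
  · cases l <;> rfl

theorem step_intern (hv : M.Visibly kind) {a : A} (ha : kind a = .intern) {c c' : Conf Q Γ}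
    (h : M.Step c (some a) c') :
    c'.2 = c.2 ∧ ∀ l, M.Step (c.1, l) (some a) (c'.1, l) := by
  obtain ⟨mv, hmv⟩ := hv.2.2.2 c.1 a ha
  obtain ⟨γ, hγ, hc'⟩ := step_iff.1 h
  rw [hmv] at hγ
  obtain ⟨q', hq', he⟩ := hγ
  simp only [Prod.mk.injEq] at he
  refine ⟨?_, fun l => step_iff.2 ⟨l.head?.toList, ?_, ?_⟩⟩
  · rw [hc', ← he.2]; cases c.2 <;> rfl
  · rw [hmv]; exact ⟨q', hq', by rw [he.1]⟩
  · cases l <;> rfl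

theorem step_ret (hv : M.Visibly kind) {a : A} (ha : kind a = .ret) {c c' : Conf Q Γ}
    (h : M.Step c (some a) c') :
    c'.2 = c.2.tail ∧ ∀ t l, c.2.head? = some t → M.Step (c.1, t :: l) (some a) (c'.1, l) := by
  obtain ⟨γ, hγ, hc'⟩ := step_iff.1 h
  obtain rfl : γ = [] := hv.2.2.1 _ _ _ ha _ hγ
  exact ⟨hc', fun t l ht => step_iff.2 ⟨[], by rw [List.head?_cons, ← ht]; exact hγ, rfl⟩⟩

theorem step_append (hv : M.Visibly kind) {a : A} {q : Q} {u β : List Γ} {c' : Conf Q Γ}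
    (h : M.Step (q, u ++ β) (some a) c') (hu : kind a = .ret → u ≠ []) :
    ∃ u', c'.2 = u' ++ β ∧ ∀ β', M.Step (q, u ++ β') (some a) (c'.1, u' ++ β') := by
  rcases ha : kind a
  · obtain ⟨B, hB, hstep⟩ := hv.step_call ha h
    exact ⟨B :: u, hB, fun _ => hstep _⟩
  · obtain ⟨t, u, rfl⟩ := List.exists_cons_of_ne_nil (hu ha)
    obtain ⟨hc', hstep⟩ := hv.step_ret ha h
    exact ⟨u, hc', fun β' => hstep t _ rfl⟩
  · obtain ⟨hc', hstep⟩ := hv.step_intern ha h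
    exact ⟨u, hc', fun _ => hstep _⟩

theorem step_rebase (hv : M.Visibly kind) {a : A} {c c' : Conf Q Γ} {β : List Γ}
    (h : M.Step c (some a) c') (hβ : β <:+ c.2) (hret : kind a = .ret → β.length < c.2.length)
    (β' : List Γ) :
    β <:+ c'.2 ∧ M.Step (rebase β.length β' c) (some a) (rebase β.length β' c') := by
  obtain ⟨u, hu⟩ := hβ
  rcases c with ⟨q, _⟩
  subst hu
  obtain ⟨u', hc', hstep⟩ := hv.step_append h fun ha hu => by
    simpa [hu] using hret ha
  refine ⟨⟨u', hc'.symm⟩, ?_⟩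
  simpa only [rebase, hc', List.rdrop_append_length] using hstep β'

section segment

variable {ρ : ℕ → Conf Q Γ} {α : ℕ → A} {β : List Γ} {p r : ℕ}

theorem isSuffix_stack (hv : M.Visibly kind) (hρ : M.IsPath ρ α) (hβ : β <:+ (ρ p).2)
    (hret : ∀ k, p ≤ k → k < r → kind (α k) = .ret → β.length < (ρ k).2.length)
    {k : ℕ} (hpk : p ≤ k) (hkr : k ≤ r) : β <:+ (ρ k).2 := by
  induction k, hpk using Nat.le_induction with
  | base => exact hβ
  | succ k hpk ih =>
    exact (hv.step_rebase (hρ k) (ih (by omega)) (hret k hpk (by omega)) []).1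

theorem step_rebase_stack (hv : M.Visibly kind) (hρ : M.IsPath ρ α) (hβ : β <:+ (ρ p).2)
    (hret : ∀ k, p ≤ k → k < r → kind (α k) = .ret → β.length < (ρ k).2.length)
    (β' : List Γ) {k : ℕ} (hpk : p ≤ k) (hkr : k < r) :
    M.Step (rebase β.length β' (ρ k)) (some (α k)) (rebase β.length β' (ρ (k + 1))) :=
  (hv.step_rebase (hρ k) (hv.isSuffix_stack hρ hβ hret hpk hkr.le) (hret k hpk hkr) β').2

theorem stack_eq_of_length_eq (hv : M.Visibly kind) (hρ : M.IsPath ρ α)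
    (hret : ∀ k, p ≤ k → k < r → kind (α k) = .ret → (ρ p).2.length < (ρ k).2.length)
    (hpr : p ≤ r) (hlen : (ρ r).2.length = (ρ p).2.length) : (ρ r).2 = (ρ p).2 :=
  ((hv.isSuffix_stack hρ List.suffix_rfl hret hpr le_rfl).eq_of_length hlen.symm).symm

theorem stack_eq_nil (hv : M.Visibly kind) (hρ0 : ρ 0 = (M.qin, [])) (hρ : M.IsPath ρ α)
    {n : ℕ} (hcall : ∀ k < n, kind (α k) ≠ .call) : (ρ n).2 = [] := by
  induction n with
  | zero => rw [hρ0]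
  | succ n ih =>
    have hnil := ih fun k hk => hcall k (by omega)
    rcases ha : kind (α n)
    · exact absurd ha (hcall n (by omega))
    · rw [(hv.step_ret ha (hρ n)).1, hnil, List.tail_nil]
    · rw [(hv.step_intern ha (hρ n)).1, hnil]

end segment

/-- The accepted word is `α[0, p) α[p', r') α[r, ∞)`: the factor `α[p', r')` never pops below
the stack at `p'`, so it can be run on top of the stack at `p` instead. -/
theorem spliceAt_segment_mem_parityLang (hv : M.Visibly kind) {col : Q → ℕ}
    {ρ : ℕ → Conf Q Γ} {α : ℕ → A} (hρ0 : ρ 0 = (M.qin, [])) (hρ : M.IsPath ρ α)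
    (hacc : ParityAcc col ρ) {p p' r' r : ℕ} (hp'r' : p' ≤ r')
    (hq : (ρ p').1 = (ρ p).1) (hq' : (ρ r').1 = (ρ r).1) (hstack : (ρ r).2 = (ρ p).2)
    (hret : ∀ k, p' ≤ k → k < r' → kind (α k) = .ret → (ρ p').2.length < (ρ k).2.length)
    (hlen : (ρ r').2.length = (ρ p').2.length) :
    spliceAt (spliceAt α α p p') α (p + (r' - p')) r ∈ M.ParityLang col := by
  set τ := fun k => rebase (ρ p').2.length (ρ p).2 (ρ k)
  have hτp' : ρ p = τ p' := by
    simp [τ, rebase, hq, List.rdrop]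
  have hτr' : τ r' = ρ r := by
    simp [τ, rebase, hq', ← hstack, List.rdrop, hlen]
  have hτ : ∀ k, p' ≤ k → k < r' → M.Step (τ k) (some (α k)) (τ (k + 1)) :=
    fun k => hv.step_rebase_stack hρ List.suffix_rfl hret _
  refine spliceAt_mem_parityLang hv.1 (ρ := spliceAt ρ τ p p') (spliceAt_zero hτp' ▸ hρ0)
    (fun k hk => step_spliceAt hτp' (fun _ => hρ k) fun hpk => hτ _ (by omega) (by omega))
    (fun k _ => hρ k) ?_ hacc
  rw [spliceAt, if_neg (by omega), show p' + (p + (r' - p') - p) = r' by omega, hτr']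

end Visibly

end PDM

namespace Lanbanb

open PDM

def word (n : ℕ) : ℕ → AB := fun i =>
  if i < n then .a else if i = n then .b else if i ≤ 2 * n then .a else .b

theorem mem_iff {α : ℕ → AB} : α ∈ Lanbanb ↔ ∃ n, word n = α :=
  ⟨fun ⟨n, h⟩ => ⟨n, funext fun i => (h i).symm⟩, fun ⟨n, h⟩ => ⟨n, fun _ => h ▸ rfl⟩⟩

theorem word_mem (n : ℕ) : word n ∈ Lanbanb := ⟨n, fun _ => rfl⟩

theorem eq_of_word_eqOn {n m K : ℕ} (h : ∀ i < K, word n i = word m i) (hn : n < K) :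
    n = m := by
  by_contra hne
  have := h (min n m) (by omega)
  unfold word at this
  split_ifs at this <;> omega

section word

variable {n k : ℕ}

theorem word_of_lt (h : k < n) : word n k = .a := if_pos h
theorem word_self : word n n = .b := by simp [word]
theorem word_of_lt_of_le (h₁ : n < k) (h₂ : k ≤ 2 * n) : word n k = .a := by
  simp [word, h₂, show ¬k < n by omega, show k ≠ n by omega]
theorem word_of_gt (h : 2 * n < k) : word n k = .b := by
  simp [word, show ¬k < n by omega, show k ≠ n by omega, show ¬k ≤ 2 * n by omega]

end word

theorem eq_b_or_lt_of_word_eq_b {n k : ℕ} (h : word n k = .b) : k = n ∨ 2 * n < k := by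
  unfold word at h
  split_ifs at h <;> omega

theorem spliceAt_word_not_mem {n m : ℕ} (hnm : n ≠ m) :
    spliceAt (word m) (word n) m n ∉ Lanbanb := by
  intro h
  obtain ⟨n', hn'⟩ := mem_iff.1 h
  have hm : m = n' := eq_of_word_eqOn (K := m + 1) (fun i hi => by
    rw [hn', spliceAt]
    rcases (Nat.lt_succ_iff.1 hi).lt_or_eq with hi | rfl
    · rw [if_pos hi]
    · rw [if_neg (lt_irrefl i), Nat.sub_self, Nat.add_zero, word_self, word_self]) (by omega)
  subst hm
  have := congrFun hn' (m + min n m + 1)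
  simp only [spliceAt, show ¬m + min n m + 1 < m by omega,
    show n + (m + min n m + 1 - m) = n + min n m + 1 by omega, word] at this
  split_ifs at this <;> omega

/-- Cutting out the factors at positions `[n+1+i, n+1+j)` and `[3n+1-j, 3n+1-i)` of
`aⁿ b aⁿ b^ω` gives `aⁿ b aⁿ⁻ʲ⁺ⁱ b^ω`. -/
theorem pumped_word_not_mem {n i j : ℕ} (hij : i < j) (hjn : j ≤ n) :
    spliceAt (spliceAt (word n) (word n) (n + 1 + i) (n + 1 + j)) (word n)
      (n + 1 + i + (3 * n + 1 - j - (n + 1 + j))) (3 * n + 1 - i) ∉ Lanbanb := by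
  intro h
  obtain ⟨n', hn'⟩ := mem_iff.1 h
  have hn : n = n' := eq_of_word_eqOn (K := n + 1) (fun k hk => by
    rw [hn', spliceAt, if_pos (by omega), spliceAt, if_pos (by omega)]) (by omega)
  subst hn
  have := congrFun hn' (2 * n)
  rw [word_of_lt_of_le (by omega) le_rfl] at this
  simp only [spliceAt] at this
  split_ifs at this <;> first | omega | rw [word_of_gt (by omega)] at this; cases this

inductive State : Type
  | push | pop | accept | reject
  deriving DecidableEq

instance : Fintype State where
  elems := {.push, .pop, .accept, .reject}
  complete x := by cases x <;> simp

def transition : State → AB → Option Unit → State × List Unit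
  | .push, .a, t => (.push, () :: t.toList)
  | .push, .b, t => (.pop, t.toList)
  | .pop, .a, some () => (.pop, [])
  | .pop, .b, none => (.accept, [])
  | .accept, .b, t => (.accept, t.toList)
  | _, _, t => (.reject, t.toList)

def dpda : PDM State AB Unit := .ofTransition transition .push

def priority : State → ℕ
  | .accept => 0
  | _ => 1

def next (c : PDM.Conf State Unit) (x : AB) : PDM.Conf State Unit :=
  ((transition c.1 x c.2.head?).1, (transition c.1 x c.2.head?).2 ++ c.2.tail)

theorem dpda_step_iff {c c' : PDM.Conf State Unit} {x : AB} :
    dpda.Step c (some x) c' ↔ c' = next c x :=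
  PDM.step_ofTransition_iff

section next

variable (l : List Unit) (x : AB)

theorem next_push_a : next (.push, l) .a = (.push, () :: l) := by cases l <;> rfl
theorem next_push_b : next (.push, l) .b = (.pop, l) := by cases l <;> rfl
theorem next_pop_a : next (.pop, () :: l) .a = (.pop, l) := rfl
theorem next_pop_b : next (.pop, []) .b = (.accept, []) := rfl
theorem next_accept_b : next (.accept, l) .b = (.accept, l) := by cases l <;> rfl
theorem next_pop_cons_b : (next (.pop, () :: l) .b).1 = .reject := rfl
theorem next_pop_nil_a : (next (.pop, []) .a).1 = .reject := rfl
theorem next_accept_a : (next (.accept, l) .a).1 = .reject := by cases l <;> rfl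
theorem next_reject : next (.reject, l) x = (.reject, l) := by cases l <;> cases x <;> rfl

end next

/-- The run of `dpda` on `word n`. -/
def run (n k : ℕ) : PDM.Conf State Unit :=
  if k ≤ n then (.push, List.replicate k ())
  else if k ≤ 2 * n + 1 then (.pop, List.replicate (2 * n + 1 - k) ()) else (.accept, [])

section run

variable {n k : ℕ}

theorem run_of_le (h : k ≤ n) : run n k = (.push, List.replicate k ()) := if_pos h
theorem run_of_lt_of_le (h₁ : n < k) (h₂ : k ≤ 2 * n + 1) :
    run n k = (.pop, List.replicate (2 * n + 1 - k) ()) := by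
  simp [run, h₂, show ¬k ≤ n by omega]
theorem run_of_gt (h : 2 * n + 1 < k) : run n k = (.accept, []) := by
  simp [run, show ¬k ≤ n by omega, show ¬k ≤ 2 * n + 1 by omega]

theorem lt_of_run_fst_eq_accept (h : (run n k).1 = .accept) : 2 * n + 1 < k := by
  unfold run at h
  split_ifs at h
  omega

theorem next_run_word (n k : ℕ) : next (run n k) (word n k) = run n (k + 1) := by
  rcases lt_trichotomy k n with h | rfl | h
  · rw [run_of_le h.le, word_of_lt h, next_push_a, run_of_le h]; rfl
  · rw [run_of_le le_rfl, word_self, next_push_b, run_of_lt_of_le (by omega) (by omega),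
      show 2 * k + 1 - (k + 1) = k by omega]
  rcases Nat.lt_or_ge k (2 * n + 1) with h' | h'
  · rw [run_of_lt_of_le h h'.le, word_of_lt_of_le h (by omega),
      show 2 * n + 1 - k = 2 * n - k + 1 by omega, List.replicate_succ, next_pop_a,
      run_of_lt_of_le (by omega) (by omega), show 2 * n + 1 - (k + 1) = 2 * n - k by omega]
  rcases h'.eq_or_lt with rfl | h'
  · rw [run_of_lt_of_le h le_rfl, word_of_gt (by omega), Nat.sub_self, List.replicate_zero,
      next_pop_b, run_of_gt (by omega)]
  · rw [run_of_gt h', word_of_gt (by omega), next_accept_b, run_of_gt (by omega)]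

theorem next_run_of_ne {x : AB} (hx : x ≠ word n k) :
    (next (run n k) x).1 = .reject ∨
      ∃ n', next (run n k) x = run n' (k + 1) ∧ (∀ i < k, word n' i = word n i) ∧
        word n' k = x := by
  rcases lt_trichotomy k n with h | rfl | h
  · rw [word_of_lt h] at hx
    cases x
    · exact absurd rfl hx
    refine Or.inr ⟨k, ?_, fun i hi => by rw [word_of_lt hi, word_of_lt (hi.trans h)], word_self⟩
    rw [run_of_le h.le, next_push_b, run_of_lt_of_le (by omega) (by omega),
      show 2 * k + 1 - (k + 1) = k by omega]
  · rw [word_self] at hx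
    cases x
    · refine Or.inr ⟨k + 1, ?_, fun i hi => by rw [word_of_lt (by omega), word_of_lt hi],
        word_of_lt (by omega)⟩
      rw [run_of_le le_rfl, next_push_a, run_of_le le_rfl]; rfl
    · exact absurd rfl hx
  left
  rcases Nat.lt_or_ge k (2 * n + 1) with h' | h'
  · rw [word_of_lt_of_le h (by omega)] at hx
    cases x
    · exact absurd rfl hx
    rw [run_of_lt_of_le h h'.le, show 2 * n + 1 - k = 2 * n - k + 1 by omega,
      List.replicate_succ, next_pop_cons_b]
  rw [word_of_gt (by omega)] at hx
  cases x
  · rcases h'.eq_or_lt with rfl | h'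
    · rw [run_of_lt_of_le h le_rfl, Nat.sub_self, List.replicate_zero, next_pop_nil_a]
    · rw [run_of_gt h', next_accept_a]
  · exact absurd rfl hx

end run

section dpda

variable {ρ : ℕ → Conf State Unit} {α : ℕ → AB}

theorem next_of_isPath (hρ : dpda.IsPath ρ α) (k : ℕ) : ρ (k + 1) = next (ρ k) (α k) :=
  dpda_step_iff.1 (hρ k)

theorem reject_absorbing (hρ : dpda.IsPath ρ α) {k j : ℕ} (hk : (ρ k).1 = .reject)
    (hkj : k ≤ j) : (ρ j).1 = .reject := by
  induction j, hkj using Nat.le_induction with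
  | base => exact hk
  | succ j _ ih =>
    rw [next_of_isPath hρ, ← Prod.mk.eta (p := ρ j), ih, next_reject]

theorem run_invariant (hρ0 : ρ 0 = (dpda.qin, [])) (hρ : dpda.IsPath ρ α) (k : ℕ) :
    (ρ k).1 = .reject ∨ ∃ n, ρ k = run n k ∧ ∀ i < k, word n i = α i := by
  induction k with
  | zero => exact Or.inr ⟨0, hρ0, fun _ h => absurd h (Nat.not_lt_zero _)⟩
  | succ k ih =>
    rw [next_of_isPath hρ]
    rcases ih with hrej | ⟨n, hn, hpre⟩
    · rw [← Prod.mk.eta (p := ρ k), hrej, next_reject]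
      exact Or.inl rfl
    rw [hn]
    by_cases hx : α k = word n k
    · refine Or.inr ⟨n, by rw [hx, next_run_word], fun i hi => ?_⟩
      rcases (Nat.lt_succ_iff.1 hi).lt_or_eq with hi | rfl
      exacts [hpre i hi, hx.symm]
    rcases next_run_of_ne hx with hrej | ⟨n', hn', hpre', hk⟩
    · exact Or.inl hrej
    refine Or.inr ⟨n', hn', fun i hi => ?_⟩
    rcases (Nat.lt_succ_iff.1 hi).lt_or_eq with hi | rfl
    exacts [(hpre' i hi).trans (hpre i hi), hk]

theorem parityAcc_iff : ParityAcc priority ρ ↔ State.accept ∈ InfOcc ρ := by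
  refine ⟨fun hacc => ?_, fun h => ?_⟩
  · obtain ⟨q, hq, hmin⟩ := Nat.sInf_mem ((infOcc_nonempty ρ).image priority)
    rw [ParityAcc, ← hmin] at hacc
    cases q <;> first | exact hq | exact absurd hacc (by decide)
  · rw [ParityAcc, Nat.sInf_eq_zero.2 (Or.inl (Set.mem_image_of_mem priority h))]
    exact Even.zero

theorem dpda_parityLang : dpda.ParityLang priority = Lanbanb := by
  ext α
  constructor
  · rintro ⟨ρ, hrun, hacc⟩
    obtain ⟨hρ0, hρ⟩ := (isRunOn_iff_of_realtime ofTransition_realtime).1 hrun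
    have hinf := parityAcc_iff.1 hacc
    have hnrej : ∀ k, (ρ k).1 ≠ .reject := fun k hk => by
      obtain ⟨j, hkj, hj⟩ := hinf k
      rw [reject_absorbing hρ hk hkj] at hj
      cases hj
    have hrun : ∀ k, ∃ n, ρ k = run n k ∧ ∀ i < k, word n i = α i := fun k =>
      (run_invariant hρ0 hρ k).resolve_left (hnrej k)
    obtain ⟨k₀, -, hk₀⟩ := hinf 0
    obtain ⟨n₀, hn₀, hpre₀⟩ := hrun k₀
    have hlt : n₀ < k₀ := by
      have := lt_of_run_fst_eq_accept (hn₀ ▸ hk₀); omega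
    refine mem_iff.2 ⟨n₀, funext fun i => ?_⟩
    obtain ⟨n, -, hpre⟩ := hrun (max (i + 1) k₀)
    have : n₀ = n := eq_of_word_eqOn (fun j hj => (hpre₀ j hj).trans
      (hpre j (by omega)).symm) hlt
    exact this ▸ hpre i (by omega)
  · intro hα
    obtain ⟨n, rfl⟩ := mem_iff.1 hα
    refine ⟨run n, (isRunOn_iff_of_realtime ofTransition_realtime).2
      ⟨run_of_le (Nat.zero_le n), fun k => dpda_step_iff.2 (next_run_word n k).symm⟩,
      parityAcc_iff.2 fun N => ⟨N + 2 * n + 2, by omega, ?_⟩⟩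
    rw [run_of_gt (by omega)]

theorem mem_DCFLomega : InDCFLomega Lanbanb :=
  ⟨State, Unit, inferInstance, inferInstance, dpda, priority, ofTransition_deterministic,
    dpda_parityLang⟩

end dpda

variable {Q Γ : Type} {M : PDM Q AB Γ} {kind : AB → VKind} {col : Q → ℕ}

theorem exists_isPath_word (hrt : M.Realtime) (hL : M.ParityLang col = Lanbanb) (n : ℕ) :
    ∃ ρ, ρ 0 = (M.qin, []) ∧ M.IsPath ρ (word n) ∧ ParityAcc col ρ :=
  exists_isPath_of_mem_parityLang hrt (hL ▸ word_mem n)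

theorem parityLang_ne_of_a_ne_call [Finite Q] (hv : M.Visibly kind) (ha : kind .a ≠ .call) :
    M.ParityLang col ≠ Lanbanb := by
  intro hL
  choose ρ hρ0 hρ hacc using exists_isPath_word hv.1 hL
  obtain ⟨n, m, hnm, hq⟩ := Finite.exists_ne_map_eq_of_infinite fun n => (ρ n n).1
  have hnil : ∀ n, (ρ n n).2 = [] := fun n =>
    hv.stack_eq_nil (hρ0 n) (hρ n) fun k hk => by rwa [word_of_lt hk]
  exact spliceAt_word_not_mem hnm (hL ▸ spliceAt_mem_parityLang hv.1 (hρ0 m)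
    (fun k _ => hρ m k) (fun k _ => hρ n k) (Prod.ext hq.symm (by rw [hnil, hnil])) (hacc n))

theorem parityLang_ne_of_ne_ret [Finite Q] (hv : M.Visibly kind) (ha : kind .a ≠ .ret)
    (hb : kind .b ≠ .ret) : M.ParityLang col ≠ Lanbanb := by
  intro hL
  choose ρ hρ0 hρ hacc using exists_isPath_word hv.1 hL
  obtain ⟨n, m, hnm, hq⟩ := Finite.exists_ne_map_eq_of_infinite fun n => (ρ n n).1
  have hnoret : ∀ x : AB, kind x ≠ .ret := by
    intro x; cases x; exacts [ha, hb]
  refine spliceAt_word_not_mem hnm (hL ▸ spliceAt_mem_parityLang hv.1 (hρ0 m)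
    (σ := fun k => rebase (ρ n n).2.length (ρ m m).2 (ρ n k)) (fun k _ => hρ m k)
    (fun k hk => hv.step_rebase_stack (hρ n) List.suffix_rfl
      (fun _ _ _ h => absurd h (hnoret _)) _ hk (Nat.lt_succ_self k)) ?_ ?_)
  · simp [rebase, List.rdrop, hq]
  · rw [ParityAcc, infOcc_congr (σ := ρ n) (ρ := fun k => rebase _ _ (ρ n k)) fun _ => rfl]
    exact hacc n

/-- The stack height along any run on `word n` when `a` is a call and `b` a return. -/
def height (n k : ℕ) : ℕ :=
  if k ≤ n then k else if k ≤ 2 * n + 1 then k - 2 else 4 * n - k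

theorem length_stack_eq_height (hv : M.Visibly kind) (ha : kind .a = .call)
    (hb : kind .b = .ret) {n : ℕ} {ρ : ℕ → Conf Q Γ} (hρ0 : ρ 0 = (M.qin, []))
    (hρ : M.IsPath ρ (word n)) (k : ℕ) : (ρ k).2.length = height n k := by
  induction k with
  | zero => simp [hρ0, height]
  | succ k ih =>
    cases hk : word n k
    · obtain ⟨B, hB, -⟩ := hv.step_call (hk ▸ ha) (hρ k)
      have : k < n ∨ n < k ∧ k ≤ 2 * n := by
        unfold word at hk; split_ifs at hk <;> omega
      rw [hB, List.length_cons, ih]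
      unfold height; split_ifs <;> omega
    · rw [(hv.step_ret (hk ▸ hb) (hρ k)).1, List.length_tail, ih]
      have := eq_b_or_lt_of_word_eq_b hk
      unfold height; split_ifs <;> omega

theorem height_lt_of_word_eq_b {n i k : ℕ} (hk₁ : n + 1 + i ≤ k) (hk₂ : k < 3 * n + 1 - i)
    (hb : word n k = .b) : height n (n + 1 + i) < height n k := by
  have := eq_b_or_lt_of_word_eq_b hb
  unfold height; split_ifs <;> omega

theorem parityLang_ne_of_call_ret [Finite Q] (hv : M.Visibly kind) (ha : kind .a = .call)
    (hb : kind .b = .ret) : M.ParityLang col ≠ Lanbanb := by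
  intro hL
  set N := Nat.card (Q × Q)
  obtain ⟨ρ, hρ0, hρ, hacc⟩ := exists_isPath_word hv.1 hL N
  have hlen := length_stack_eq_height hv ha hb hρ0 hρ
  have hword : ∀ k, kind (word N k) = .ret → word N k = .b := fun k hk => by
    cases h : word N k
    · rw [h, ha] at hk; cases hk
    · rfl
  have hret : ∀ i ≤ N, ∀ k, N + 1 + i ≤ k → k < 3 * N + 1 - i → kind (word N k) = .ret →
      (ρ (N + 1 + i)).2.length < (ρ k).2.length := fun i _ k hk₁ hk₂ hk => by
    rw [hlen, hlen]; exact height_lt_of_word_eq_b hk₁ hk₂ (hword k hk)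
  have hpump : ∀ i j, i < j → j ≤ N → (ρ (N + 1 + i)).1 = (ρ (N + 1 + j)).1 →
      (ρ (3 * N + 1 - i)).1 = (ρ (3 * N + 1 - j)).1 → False := fun i j hij hjN hq hq' =>
    pumped_word_not_mem hij hjN <| hL ▸ hv.spliceAt_segment_mem_parityLang hρ0 hρ hacc
      (by omega) hq.symm hq'.symm
      (hv.stack_eq_of_length_eq hρ (hret i (by omega)) (by omega)
        (by rw [hlen, hlen]; unfold height; split_ifs <;> omega))
      (hret j hjN) (by rw [hlen, hlen]; unfold height; split_ifs <;> omega)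
  obtain ⟨i, j, hq, hij⟩ := Function.not_injective_iff.1 fun hinj =>
    (Nat.card_le_card_of_injective
      (fun i : Fin (N + 1) => ((ρ (N + 1 + i)).1, (ρ (3 * N + 1 - i)).1)) hinj).not_gt
      (by simp [N])
  simp only [Prod.mk.injEq] at hq
  rcases Fin.lt_or_lt_of_ne hij with h | h
  · exact hpump i j h (by omega) hq.1 hq.2
  · exact hpump j i h (by omega) hq.1.symm hq.2.symm

end Lanbanb

/-- `L = {aⁿ b aⁿ b^ω | n ∈ ℕ} ∈ DCFL_ω`, but for every partition of
`{a,b}` into calls, returns and internal actions, `L ∉ VPL_ω`; hence `DCFL_ω ⊄ VPL_ω`. -/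
theorem anbanb_in_DCFLomega_not_in_VPLomega :
    InDCFLomega Lanbanb ∧ ∀ kind : AB → VKind, ¬ InVPLomega kind Lanbanb := by
  refine ⟨Lanbanb.mem_DCFLomega, fun kind ⟨Q, Γ, _, _, M, col, hv, hL⟩ => ?_⟩
  by_cases ha : kind .a = .call
  · by_cases hb : kind .b = .ret
    · exact Lanbanb.parityLang_ne_of_call_ret hv ha hb hL
    · exact Lanbanb.parityLang_ne_of_ne_ret hv (by rw [ha]; exact nofun) hb hL
  · exact Lanbanb.parityLang_ne_of_a_ne_call hv ha hL
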